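/- In the binary-symmetric tracking example, d(0) = (κ−1)/2 and λ₁ = ((1−p)/p)(κ−1), yielding the bound d(α) ≥ (κ−1)(1/2 − α(1−p)/p). -/

import Mathlib

open Finset
open scoped Classical

noncomputable section

variable {Ω : Type*} [Fintype Ω] {𝒳 : Type*} {𝒴 : Type*}

/-- Probability of an event under weights `p` on a finite sample space. -/
def prW (p : Ω → ℝ) (A : Ω → Prop) : ℝ := ∑ ω, if A ω then p ω else 0

/-- Expectation under weights `p`. -/
def exW (p : Ω → ℝ) (f : Ω → ℝ) : ℝ := ∑ ω, p ω * f ω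

/-- `p` is a probability weight function. -/
def IsProbW (p : Ω → ℝ) : Prop := (∀ ω, 0 ≤ p ω) ∧ ∑ ω, p ω = 1

/-- Conditional probability `P(A | B)`. -/
def cprW (p : Ω → ℝ) (A B : Ω → Prop) : ℝ := prW p (fun ω => A ω ∧ B ω) / prW p B

/-- Conditional expectation `E(f | B)`. -/
def cexW (p : Ω → ℝ) (f : Ω → ℝ) (B : Ω → Prop) : ℝ :=
  (∑ ω, if B ω then p ω * f ω else 0) / prW p B

/-- positive part of a real number -/
def posP (x : ℝ) : ℝ := max x 0

/-- `S` is a (non-randomized) stopping time w.r.t. the process `X` (time starts at 1):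
its value is determined by the observations up to itself. -/
def IsSTW (X : ℕ → Ω → 𝒳) (S : Ω → ℕ) : Prop :=
  ∀ ω ω', (∀ i, 1 ≤ i → i ≤ S ω → X i ω = X i ω') → S ω' = S ω

/-- The path of the process `Y` at sample `ω`. -/
def pathOf (Y : ℕ → Ω → 𝒴) (ω : Ω) : ℕ → 𝒴 := fun i => Y i ω

/-- The path `f` extends (passes through) the node `y` (a finite string). -/
def ExtN (y : List 𝒴) (f : ℕ → 𝒴) : Prop := ∀ i : Fin y.length, f (i.1 + 1) = y.get i

/-- A stopping function on paths: its value depends only on the path up to that value.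
This is the path-representation of a non-randomized stopping time (a tree). -/
def IsStopFun (t : (ℕ → 𝒴) → ℕ) : Prop :=
  ∀ f g, (∀ i, 1 ≤ i → i ≤ t f → f i = g i) → t g = t f

/-- `y` is an internal node of the tree `t`. -/
def InternalNode (t : (ℕ → 𝒴) → ℕ) (y : List 𝒴) : Prop :=
  ∀ f, ExtN y f → y.length < t f

/-- `u` is (the stopping function of) a subtree rooted at node `y`. -/
def IsSubtreeAt (y : List 𝒴) (u : (ℕ → 𝒴) → ℕ) : Prop :=
  IsStopFun u ∧ ∀ f, ExtN y f → y.length ≤ u f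

/-- false-alarm weight `a(y)` of node `y` -/
def aW (p : Ω → ℝ) (Y : ℕ → Ω → 𝒴) (S : Ω → ℕ) (y : List 𝒴) : ℝ :=
  prW p (fun ω => ExtN y (pathOf Y ω) ∧ y.length < S ω)

/-- delay weight `b(y)` of node `y` -/
def bW (p : Ω → ℝ) (Y : ℕ → Ω → 𝒴) (S : Ω → ℕ) (y : List 𝒴) : ℝ :=
  exW p (fun ω => if ExtN y (pathOf Y ω) then posP ((y.length : ℝ) - (S ω : ℝ)) else 0)

/-- false-alarm weight `a(T_y)` of a subtree `u` rooted at `y` (the sum of `a(γ)`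
over its leaves `γ`). -/
def aSubW (p : Ω → ℝ) (Y : ℕ → Ω → 𝒴) (S : Ω → ℕ) (y : List 𝒴) (u : (ℕ → 𝒴) → ℕ) : ℝ :=
  prW p (fun ω => ExtN y (pathOf Y ω) ∧ u (pathOf Y ω) < S ω)

/-- delay weight `b(T_y)` of a subtree `u` rooted at `y` (the sum of `b(γ)` over its leaves). -/
def bSubW (p : Ω → ℝ) (Y : ℕ → Ω → 𝒴) (S : Ω → ℕ) (y : List 𝒴) (u : (ℕ → 𝒴) → ℕ) : ℝ :=
  exW p (fun ω => if ExtN y (pathOf Y ω) then posP ((u (pathOf Y ω) : ℝ) - (S ω : ℝ)) else 0)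

/-- Lagrangian cost `J_λ(T_y)` of the subtree `u` rooted at `y`. -/
def JsubW (p : Ω → ℝ) (Y : ℕ → Ω → 𝒴) (S : Ω → ℕ) (lam : ℝ) (y : List 𝒴)
    (u : (ℕ → 𝒴) → ℕ) : ℝ :=
  bSubW p Y S y u + lam * aSubW p Y S y u

/-- Lagrangian cost `J_λ(y)` of the single node `y`. -/
def JnodeW (p : Ω → ℝ) (Y : ℕ → Ω → 𝒴) (S : Ω → ℕ) (lam : ℝ) (y : List 𝒴) : ℝ :=
  bW p Y S y + lam * aW p Y S y

/-- `u` is the smallest minimal-cost rooted subtree `T_y(λ)` of `t` at node `y`,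
for Lagrange multiplier `lam`. -/
def IsOptSubtreeAt (p : Ω → ℝ) (Y : ℕ → Ω → 𝒴) (S : Ω → ℕ) (lam : ℝ)
    (t : (ℕ → 𝒴) → ℕ) (y : List 𝒴) (u : (ℕ → 𝒴) → ℕ) : Prop :=
  IsSubtreeAt y u ∧ (∀ f, ExtN y f → u f ≤ t f) ∧
  (∀ v, IsSubtreeAt y v → (∀ f, ExtN y f → v f ≤ t f) →
    JsubW p Y S lam y u ≤ JsubW p Y S lam y v) ∧
  (∀ v, IsSubtreeAt y v → (∀ f, ExtN y f → v f ≤ t f) →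
    JsubW p Y S lam y v = JsubW p Y S lam y u → ∀ f, ExtN y f → u f ≤ v f)

/-- the tradeoff quantity `g(y, T) = (b(T_y) - b(y)) / (a(y) - a(T_y))`
(with the convention 0/0 = 0, which holds automatically for real division). -/
def gW (p : Ω → ℝ) (Y : ℕ → Ω → 𝒴) (S : Ω → ℕ) (t : (ℕ → 𝒴) → ℕ) (y : List 𝒴) : ℝ :=
  (bSubW p Y S y t - bW p Y S y) / (aW p Y S y - aSubW p Y S y t)

/-- node permuted by a coordinate permutation -/
def permNode (y : List 𝒴) (π : Equiv.Perm (Fin y.length)) : List 𝒴 :=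
  List.ofFn fun i => y.get (π i)

/-- permutation invariance of a stopping time w.r.t. process `Y`:
`P(T ≤ n | Y^n = y^n) = P(T ≤ n | Y^n = π(y^n))`. -/
def PermInvST (p : Ω → ℝ) (Y : ℕ → Ω → 𝒴) (T : Ω → ℕ) (κ : ℕ) : Prop :=
  ∀ y : List 𝒴, y.length ≤ κ → ∀ π : Equiv.Perm (Fin y.length),
    cprW p (fun ω => T ω ≤ y.length) (fun ω => ExtN y (pathOf Y ω)) =
    cprW p (fun ω => T ω ≤ y.length) (fun ω => ExtN (permNode y π) (pathOf Y ω))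

/-- the pairs `(X_i, Y_i)` are i.i.d. (over the first `κ` time steps). -/
def IIDPairs [Fintype 𝒳] [Fintype 𝒴] (p : Ω → ℝ) (X : ℕ → Ω → 𝒳) (Y : ℕ → Ω → 𝒴)
    (κ : ℕ) : Prop :=
  ∃ μ : 𝒳 × 𝒴 → ℝ, (∀ z, 0 ≤ μ z) ∧ (∑ z, μ z = 1) ∧
    ∀ (x : ℕ → 𝒳) (yf : ℕ → 𝒴),
      prW p (fun ω => ∀ i, 1 ≤ i → i ≤ κ → X i ω = x i ∧ Y i ω = yf i) =
        ∏ i ∈ Finset.Icc 1 κ, μ (x i, yf i)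

/-- a randomized stopping time bounded by `κ`, given by its conditional stopping
kernel `q n y^n = P(T = n | Y^n = y^n)`. -/
def IsRandST (q : ℕ → (ℕ → 𝒴) → ℝ) (κ : ℕ) : Prop :=
  (∀ n f, 0 ≤ q n f) ∧
  (∀ n f g, (∀ i, 1 ≤ i → i ≤ n → f i = g i) → q n g = q n f) ∧
  (∀ f, ∑ n ∈ Finset.Icc 1 κ, q n f = 1)

/-- false-alarm probability `P(T < S)` of a randomized stopping time -/
def faR (p : Ω → ℝ) (Y : ℕ → Ω → 𝒴) (S : Ω → ℕ) (κ : ℕ) (q : ℕ → (ℕ → 𝒴) → ℝ) : ℝ :=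
  exW p (fun ω => ∑ n ∈ Finset.Icc 1 κ, q n (pathOf Y ω) * (if n < S ω then 1 else 0))

/-- expected reaction delay `E(T - S)⁺` of a randomized stopping time -/
def delayR (p : Ω → ℝ) (Y : ℕ → Ω → 𝒴) (S : Ω → ℕ) (κ : ℕ) (q : ℕ → (ℕ → 𝒴) → ℝ) : ℝ :=
  exW p (fun ω => ∑ n ∈ Finset.Icc 1 κ, q n (pathOf Y ω) * posP ((n : ℝ) - (S ω : ℝ)))

/-- the optimal tradeoff curve `d(α)` -/
def dW (p : Ω → ℝ) (Y : ℕ → Ω → 𝒴) (S : Ω → ℕ) (κ : ℕ) (α : ℝ) : ℝ :=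
  sInf {v | ∃ q, IsRandST q κ ∧ faR p Y S κ q ≤ α ∧ v = delayR p Y S κ q}

/-- the stopping kernel of a non-randomized stopping function -/
def detKer (t : (ℕ → 𝒴) → ℕ) : ℕ → (ℕ → 𝒴) → ℝ := fun n f => if t f = n then 1 else 0

/-- prefix of length `n` of a path (the node of depth `n` it visits) -/
def prefixOf (f : ℕ → 𝒴) (n : ℕ) : List 𝒴 := (List.range n).map fun i => f (i + 1)

/-- the one-step-lookahead node cost `c(y^n)` -/
def cnodeW (p : Ω → ℝ) (Y : ℕ → Ω → 𝒴) (S : Ω → ℕ) (lam : ℝ) (y : List 𝒴) : ℝ :=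
  cexW p (fun ω => posP ((y.length : ℝ) - (S ω : ℝ))) (fun ω => ExtN y (pathOf Y ω)) +
    lam * cprW p (fun ω => y.length < S ω) (fun ω => ExtN y (pathOf Y ω))

end

/-!
With `λ₁ = (κ - 1)(1 - p)/p`, every randomized stopping time satisfies
`E(T - S)⁺ + λ₁ P(T < S) ≥ (κ - 1)/2`. Along a sample path, the Lagrangian cost is at least
`(κ - 1) P(T = κ | Y)` when `X₁ = 1` (so `S = 1`) and equals `λ₁ P(T < κ | Y)` when `X₁ = 0`
(so `S = κ`). Given the first `κ` outputs, the odds of `X₁ = 1` against `X₁ = 0` are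
`P(Y₁ | X₁ = 1) / P(Y₁ | X₁ = 0) ≤ (1 - p)/p`, so with this `λ₁` stopping before `κ` never
lowers the cost. Stopping at `κ` costs `(κ - 1)/2` with no false alarm, which gives `d(0)` and the
lower bound on `d(α)`. For the complete tree of depth `κ`, a node `y` of depth `n ≥ 1` has
`g(y) = (κ - n) P(y₁ | X₁ = 1) / P(y₁ | X₁ = 0)`, largest at `y = (1)`, while the root has
`g = (κ - 1)/2`.
-/

section Weights

variable {Ω : Type*} [Fintype Ω] (p : Ω → ℝ)

lemma prW_congr {A B : Ω → Prop} (h : ∀ ω, A ω ↔ B ω) : prW p A = prW p B := by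
  rw [funext fun ω => propext (h ω)]

lemma prW_eq_exW (A : Ω → Prop) [DecidablePred A] :
    prW p A = exW p (fun ω => if A ω then 1 else 0) := by
  simp only [prW, exW, mul_ite, mul_one, mul_zero]
  congr!

lemma exW_ite_const (A : Ω → Prop) [DecidablePred A] (c : ℝ) :
    exW p (fun ω => if A ω then c else 0) = c * prW p A := by
  simp only [exW, prW, mul_sum, mul_ite, mul_zero]
  exact sum_congr rfl fun ω _ => by rw [mul_comm]

lemma exW_add (f g : Ω → ℝ) : exW p (fun ω => f ω + g ω) = exW p f + exW p g := by
  simp only [exW, mul_add, sum_add_distrib]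

lemma exW_sub (f g : Ω → ℝ) : exW p (fun ω => f ω - g ω) = exW p f - exW p g := by
  simp only [exW, mul_sub, sum_sub_distrib]

lemma exW_const_mul (c : ℝ) (f : Ω → ℝ) : exW p (fun ω => c * f ω) = c * exW p f := by
  simp only [exW, mul_sum]
  exact sum_congr rfl fun ω _ => by ring

lemma exW_mono (hp : IsProbW p) {f g : Ω → ℝ} (h : ∀ ω, f ω ≤ g ω) : exW p f ≤ exW p g :=
  sum_le_sum fun ω _ => mul_le_mul_of_nonneg_left (h ω) (hp.1 ω)

lemma prW_of_forall (hp : IsProbW p) {A : Ω → Prop} (h : ∀ ω, A ω) : prW p A = 1 := by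
  simp [prW, h, hp.2]

lemma prW_of_forall_not {A : Ω → Prop} (h : ∀ ω, ¬ A ω) : prW p A = 0 := by
  simp [prW, h]

lemma exW_eq_sum_fiber {β : Type*} [Fintype β] (V : Ω → β) (G : β → ℝ) :
    exW p (fun ω => G (V ω)) = ∑ v, prW p (fun ω => V ω = v) * G v := by
  simp only [exW, prW, sum_mul, ite_mul, zero_mul]
  rw [sum_comm]
  exact sum_congr rfl fun ω _ => by simp

lemma exW_mul_nonpos {β : Type*} [DecidableEq β] (V : Ω → β) {φ : β → ℝ} (hφ : ∀ v, 0 ≤ φ v)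
    (Z : Ω → ℝ) (hZ : ∀ v, exW p (fun ω => if V ω = v then Z ω else 0) ≤ 0) :
    exW p (fun ω => φ (V ω) * Z ω) ≤ 0 := by
  have hfib : exW p (fun ω => φ (V ω) * Z ω) =
      ∑ v ∈ univ.image V, φ v * exW p (fun ω => if V ω = v then Z ω else 0) := by
    simp only [exW, mul_sum, mul_ite, mul_zero]
    rw [sum_comm]
    refine sum_congr rfl fun ω _ => ?_
    rw [sum_ite_eq, if_pos (mem_image_of_mem V (mem_univ ω))]
    ring
  rw [hfib]
  exact sum_nonpos fun v _ => mul_nonpos_of_nonneg_of_nonpos (hφ v) (hZ v)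

end Weights

section Nodes

variable {α : Type*}

lemma extN_nil (f : ℕ → α) : ExtN [] f := fun i => i.elim0

lemma extN_iff_getD (y : List α) (f : ℕ → α) (d : α) :
    ExtN y f ↔ ∀ i, 1 ≤ i → i ≤ y.length → f i = y.getD (i - 1) d := by
  refine ⟨fun h i h1 h2 => ?_, fun h i => ?_⟩
  · have := h ⟨i - 1, by omega⟩
    rwa [Nat.sub_add_cancel h1, List.get_eq_getElem, ← List.getD_eq_getElem _ d] at this
  · rw [h (i + 1) (by omega) i.2, Nat.add_sub_cancel, List.getD_eq_getElem _ d i.2,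
      List.get_eq_getElem]

lemma prefixOf_eq_iff (f : ℕ → α) (n : ℕ) (y : List α) :
    prefixOf f n = y ↔ y.length = n ∧ ExtN y f := by
  constructor
  · rintro rfl
    exact ⟨by simp [prefixOf], fun i => by
      rw [List.get_eq_getElem]; simp [prefixOf]⟩
  · rintro ⟨hlen, hy⟩
    refine List.ext_getElem (by simp [prefixOf, hlen]) fun i h₁ h₂ => ?_
    simpa [prefixOf] using hy ⟨i, h₂⟩

end Nodes

section DetKernel

variable {Ω : Type*} [Fintype Ω] {𝒴 : Type*} {t : (ℕ → 𝒴) → ℕ} {κ : ℕ}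

lemma isRandST_detKer (ht : IsStopFun t) (htκ : ∀ f, t f ∈ Icc 1 κ) : IsRandST (detKer t) κ := by
  refine ⟨fun n f => by unfold detKer; positivity, fun n f g hfg => ?_, fun f => ?_⟩
  · have hiff : t g = n ↔ t f = n := by
      constructor
      · rintro rfl; exact ht g f fun i h1 h2 => (hfg i h1 h2).symm
      · rintro rfl; exact ht f g hfg
    simp only [detKer, hiff]
  · simp [detKer, htκ f]

lemma sum_detKer_mul (htκ : ∀ f, t f ∈ Icc 1 κ) (f : ℕ → 𝒴) (g : ℕ → ℝ) :
    ∑ n ∈ Icc 1 κ, detKer t n f * g n = g (t f) := by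
  simp [detKer, htκ f]

lemma faR_detKer (p : Ω → ℝ) (Y : ℕ → Ω → 𝒴) (S : Ω → ℕ) (htκ : ∀ f, t f ∈ Icc 1 κ) :
    faR p Y S κ (detKer t) = aSubW p Y S [] t := by
  simp only [faR, aSubW, sum_detKer_mul htκ, prW_eq_exW, extN_nil, true_and]

lemma delayR_detKer (p : Ω → ℝ) (Y : ℕ → Ω → 𝒴) (S : Ω → ℕ) (htκ : ∀ f, t f ∈ Icc 1 κ) :
    delayR p Y S κ (detKer t) = bSubW p Y S [] t := by
  simp only [delayR, bSubW, sum_detKer_mul htκ, extN_nil, if_true]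

end DetKernel

lemma posP_nonneg (x : ℝ) : 0 ≤ posP x := le_max_right x 0

lemma posP_of_nonpos {x : ℝ} (hx : x ≤ 0) : posP x = 0 := max_eq_right hx

lemma posP_of_nonneg {x : ℝ} (hx : 0 ≤ x) : posP x = x := max_eq_left hx

/-- The Lagrangian cost on one sample path, where `r` is the stopping kernel along the path and
the change occurs at time `1` (`b = true`) or at the horizon `κ` (`b = false`). -/
lemma le_path_cost {κ : ℕ} (hκ : 1 ≤ κ) {r : ℕ → ℝ} (hr0 : ∀ n, 0 ≤ r n)
    (hr1 : ∑ n ∈ Icc 1 κ, r n = 1) {lam : ℝ} (hlam : 0 ≤ lam) (b : Bool) :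
    (if b = true then (κ : ℝ) - 1 else 0) - (1 - r κ) * (if b = true then (κ : ℝ) - 1 else -lam) ≤
      ∑ n ∈ Icc 1 κ, r n * posP ((n : ℝ) - ((if b = true then 1 else κ : ℕ) : ℝ)) +
        lam * ∑ n ∈ Icc 1 κ, r n * (if n < (if b = true then 1 else κ) then 1 else 0) := by
  have hκmem : κ ∈ Icc 1 κ := mem_Icc.2 ⟨hκ, le_rfl⟩
  cases b
  · have hdelay : ∑ n ∈ Icc 1 κ, r n * posP ((n : ℝ) - κ) = 0 :=
      sum_eq_zero fun n hn => by
        rw [posP_of_nonpos (by have := (mem_Icc.1 hn).2; rw [sub_nonpos]; exact_mod_cast this),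
          mul_zero]
    have hfa : ∑ n ∈ Icc 1 κ, r n * (if n < κ then 1 else 0) = 1 - r κ := by
      have hterm : ∀ n ∈ Icc 1 κ,
          r n * (if n < κ then 1 else 0) = r n - if n = κ then r n else 0 := by
        intro n hn
        have := (mem_Icc.1 hn).2
        by_cases h : n = κ
        · simp [h]
        · simp [h, show n < κ by omega]
      rw [sum_congr rfl hterm, sum_sub_distrib, sum_ite_eq', if_pos hκmem, hr1]
    simp only [Bool.false_eq_true, if_false, hdelay, hfa]
    linarith
  · have hdelay : r κ * ((κ : ℝ) - 1) ≤ ∑ n ∈ Icc 1 κ, r n * posP ((n : ℝ) - 1) := by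
      have := single_le_sum (f := fun n => r n * posP ((n : ℝ) - 1))
        (fun n _ => mul_nonneg (hr0 n) (posP_nonneg _)) hκmem
      have hκ' : (1 : ℝ) ≤ κ := by exact_mod_cast hκ
      rwa [posP_of_nonneg (by linarith)] at this
    have hfa : 0 ≤ lam * ∑ n ∈ Icc 1 κ, r n * (if n < 1 then 1 else 0) :=
      mul_nonneg hlam (sum_nonneg fun n _ => mul_nonneg (hr0 n) (by positivity))
    simp only [if_true, Nat.cast_one]
    linarith

def bsc (pc : ℝ) (x y : Bool) : ℝ := if y = x then 1 - pc else pc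

def BSCLaw {Ω : Type*} [Fintype Ω] (p : Ω → ℝ) (X Y : ℕ → Ω → Bool) (κ : ℕ) (pc : ℝ) : Prop :=
  ∀ x yf : ℕ → Bool,
    prW p (fun ω => ∀ i, 1 ≤ i → i ≤ κ → X i ω = x i ∧ Y i ω = yf i) =
      ∏ i ∈ Icc 1 κ, ((1 / 2 : ℝ) * bsc pc (x i) (yf i))

lemma bsc_pos {pc : ℝ} (hpc0 : 0 < pc) (hpc1 : pc < 1) (x y : Bool) : 0 < bsc pc x y := by
  unfold bsc; split <;> linarith

lemma bsc_true_le {pc : ℝ} (hpc0 : 0 < pc) (hpc1 : pc ≤ 1 / 2) (y : Bool) :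
    bsc pc true y ≤ (1 - pc) / pc * bsc pc false y := by
  rw [div_mul_eq_mul_div, le_div_iff₀ hpc0]
  cases y
  · simp only [bsc, Bool.false_eq_true, ↓reduceIte]; nlinarith
  · simp only [bsc, ↓reduceIte, Bool.true_eq_false]; nlinarith

section Channel

variable {Ω : Type*} [Fintype Ω] (p : Ω → ℝ) (X Y : ℕ → Ω → Bool) (κ : ℕ) (pc : ℝ)

lemma prW_forall_Icc (hlaw : BSCLaw p X Y κ pc) (P : ℕ → Bool × Bool → Prop)
    [∀ i, DecidablePred (P i)] :
    prW p (fun ω => ∀ i ∈ Icc 1 κ, P i (X i ω, Y i ω)) =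
      ∏ i ∈ Icc 1 κ, ∑ c : Bool × Bool, if P i c then (1 / 2) * bsc pc c.1 c.2 else 0 := by
  set V : Ω → Icc 1 κ → Bool × Bool := fun ω i => (X i ω, Y i ω)
  have hatom : ∀ z, prW p (fun ω => V ω = z) = ∏ i, (1 / 2) * bsc pc (z i).1 (z i).2 := by
    intro z
    set x : ℕ → Bool := fun j => if h : j ∈ Icc 1 κ then (z ⟨j, h⟩).1 else false
    set yf : ℕ → Bool := fun j => if h : j ∈ Icc 1 κ then (z ⟨j, h⟩).2 else false
    have hevent : ∀ ω, (∀ i, 1 ≤ i → i ≤ κ → X i ω = x i ∧ Y i ω = yf i) ↔ V ω = z := by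
      refine fun ω => ⟨fun h => funext fun i => ?_, fun h i h1 h2 => ?_⟩
      · have hi := h i (mem_Icc.1 i.2).1 (mem_Icc.1 i.2).2
        simp only [x, yf, dif_pos i.2] at hi
        exact Prod.ext hi.1 hi.2
      · subst h
        simp only [x, yf, dif_pos (mem_Icc.2 ⟨h1, h2⟩), V, and_self]
    rw [← prW_congr p hevent, hlaw, ← prod_coe_sort]
    simp only [x, yf, coe_mem, dif_pos]
  set G : (Icc 1 κ → Bool × Bool) → ℝ := fun z => if ∀ i : Icc 1 κ, P i (z i) then 1 else 0
  calc prW p (fun ω => ∀ i ∈ Icc 1 κ, P i (X i ω, Y i ω))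
      = exW p (fun ω => G (V ω)) := by
        simp only [prW_eq_exW, G, V, Subtype.forall]
    _ = ∑ z : Icc 1 κ → Bool × Bool,
          ∏ i : Icc 1 κ, if P i (z i) then (1 / 2) * bsc pc (z i).1 (z i).2 else 0 := by
        rw [exW_eq_sum_fiber]
        refine sum_congr rfl fun z _ => ?_
        rw [hatom, prod_ite_zero]
        simp [G]
    _ = _ := by rw [← prod_coe_sort, Fintype.prod_sum]

lemma prW_X1 (hlaw : BSCLaw p X Y κ pc) (hκ : 1 ≤ κ) (b : Bool) :
    prW p (fun ω => X 1 ω = b) = 1 / 2 := by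
  have hcoord : ∀ i, (∑ c : Bool × Bool, if i = 1 → c.1 = b then (1 / 2) * bsc pc c.1 c.2 else 0) =
      if i = 1 then 1 / 2 else 1 := by
    intro i
    by_cases hi : i = 1 <;> cases b <;> norm_num [hi, Fintype.sum_prod_type, bsc, ← mul_add]
  rw [prW_congr p (B := fun ω => ∀ i ∈ Icc 1 κ, i = 1 → (X i ω, Y i ω).1 = b)
      fun ω => ⟨fun h i _ hi => hi ▸ h, fun h => h 1 (mem_Icc.2 ⟨le_rfl, hκ⟩) rfl⟩,
    prW_forall_Icc p X Y κ pc hlaw (fun i c => i = 1 → c.1 = b),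
    prod_congr rfl fun i _ => hcoord i, prod_ite_eq',
    if_pos (mem_Icc.2 ⟨le_rfl, hκ⟩)]

lemma prW_extN_cons_X1 (hlaw : BSCLaw p X Y κ pc) (a : Bool) (t : List Bool)
    (ht : t.length < κ) (b : Bool) :
    prW p (fun ω => ExtN (a :: t) (pathOf Y ω) ∧ X 1 ω = b) =
      (1 / 2) ^ (t.length + 1) * bsc pc b a := by
  set y := a :: t
  set n := t.length + 1
  have hcoord : ∀ i, (∑ c : Bool × Bool,
      if (i ≤ n → c.2 = y.getD (i - 1) false) ∧ (i = 1 → c.1 = b)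
        then (1 / 2) * bsc pc c.1 c.2 else 0) =
      if i ≤ n then (1 / 2) * (if i = 1 then bsc pc b a else 1) else 1 := by
    intro i
    by_cases hi : i = 1
    · subst hi
      cases a <;> cases b <;> simp [n, y, Fintype.sum_prod_type, bsc]
    · by_cases hin : i ≤ n
      · cases y.getD (i - 1) false <;> norm_num [hi, hin, Fintype.sum_prod_type, bsc, ← mul_add]
      · norm_num [hi, hin, Fintype.sum_prod_type, bsc, ← mul_add]
  have hevent : ∀ ω, ExtN y (pathOf Y ω) ∧ X 1 ω = b ↔ ∀ i ∈ Icc 1 κ,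
      (i ≤ n → (X i ω, Y i ω).2 = y.getD (i - 1) false) ∧ (i = 1 → (X i ω, Y i ω).1 = b) := by
    intro ω
    rw [extN_iff_getD y _ false]
    constructor
    · rintro ⟨h, hb⟩ i hi
      exact ⟨fun hin => h i (mem_Icc.1 hi).1 hin, fun h1 => h1 ▸ hb⟩
    · intro h
      refine ⟨fun i h1 h2 => (h i (mem_Icc.2 ⟨h1, by have : i ≤ n := h2; omega⟩)).1 h2,
        (h 1 (mem_Icc.2 ⟨le_rfl, by omega⟩)).2 rfl⟩
  have hfilter : (Icc 1 κ).filter (· ≤ n) = Icc 1 n := by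
    ext i; simp only [mem_filter, mem_Icc]; omega
  rw [prW_congr p hevent, prW_forall_Icc p X Y κ pc hlaw
      (fun i c => (i ≤ n → c.2 = y.getD (i - 1) false) ∧ (i = 1 → c.1 = b)),
    prod_congr rfl fun i _ => hcoord i, ← prod_filter, hfilter, prod_mul_distrib, prod_const,
    prod_ite_eq', if_pos (mem_Icc.2 ⟨le_rfl, by omega⟩), Nat.card_Icc, Nat.add_sub_cancel]

end Channel

section ChangeTime

variable {Ω : Type*} (X : ℕ → Ω → Bool) (κ : ℕ) (S : Ω → ℕ)

lemma posP_sub_S (hSdef : ∀ ω, S ω = if X 1 ω = true then 1 else κ) {c : ℕ} (hc1 : 1 ≤ c)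
    (hcκ : c ≤ κ) (ω : Ω) : posP ((c : ℝ) - S ω) = if X 1 ω = true then (c : ℝ) - 1 else 0 := by
  have hc1' : (1 : ℝ) ≤ c := by exact_mod_cast hc1
  have hcκ' : (c : ℝ) ≤ κ := by exact_mod_cast hcκ
  rw [hSdef ω]
  cases X 1 ω
  · simpa using posP_of_nonpos (by linarith)
  · simpa using posP_of_nonneg (by linarith)

lemma lt_S_iff (hSdef : ∀ ω, S ω = if X 1 ω = true then 1 else κ) {c : ℕ} (hc1 : 1 ≤ c)
    (hcκ : c < κ) (ω : Ω) : c < S ω ↔ X 1 ω = false := by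
  rw [hSdef ω]
  cases X 1 ω <;>
    simp only [Bool.false_eq_true, Bool.true_eq_false, ↓reduceIte, iff_true, iff_false, not_lt] <;>
    omega

lemma S_mem_Icc (hSdef : ∀ ω, S ω = if X 1 ω = true then 1 else κ) (hκ : 1 ≤ κ) (ω : Ω) :
    S ω ∈ Icc 1 κ := by
  rw [hSdef ω, mem_Icc]; split <;> omega

end ChangeTime

section Example

variable {Ω : Type*} [Fintype Ω] (p : Ω → ℝ) (X Y : ℕ → Ω → Bool) (κ : ℕ) (pc : ℝ) (S : Ω → ℕ)

lemma exW_prefixOf_fiber_nonpos (hlaw : BSCLaw p X Y κ pc) (hκ : 1 ≤ κ) (hpc0 : 0 < pc)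
    (hpc1 : pc ≤ 1 / 2) (y : List Bool) :
    exW p (fun ω => if prefixOf (pathOf Y ω) κ = y then
      (if X 1 ω = true then (κ : ℝ) - 1 else -((1 - pc) / pc * ((κ : ℝ) - 1))) else 0) ≤ 0 := by
  by_cases hlen : y.length = κ
  swap
  · have hne : ∀ ω, prefixOf (pathOf Y ω) κ ≠ y := fun ω h => hlen ((prefixOf_eq_iff _ _ _).1 h).1
    simp [exW, hne]
  obtain ⟨a, t, rfl⟩ : ∃ a t, y = a :: t := by
    cases y with
    | nil => simp only [List.length_nil] at hlen; omega
    | cons a t => exact ⟨a, t, rfl⟩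
  have hsplit : ∀ ω, (if prefixOf (pathOf Y ω) κ = a :: t then
      (if X 1 ω = true then (κ : ℝ) - 1 else -((1 - pc) / pc * ((κ : ℝ) - 1))) else 0) =
      (if ExtN (a :: t) (pathOf Y ω) ∧ X 1 ω = true then (κ : ℝ) - 1 else 0) -
      (if ExtN (a :: t) (pathOf Y ω) ∧ X 1 ω = false then (1 - pc) / pc * ((κ : ℝ) - 1)
        else 0) := by
    intro ω
    simp only [prefixOf_eq_iff]
    cases X 1 ω <;> by_cases h : ExtN (a :: t) (pathOf Y ω) <;> simp [h, hlen]
  simp only [hsplit]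
  simp only [List.length_cons] at hlen
  rw [exW_sub, exW_ite_const, exW_ite_const, prW_extN_cons_X1 p X Y κ pc hlaw a t (by omega),
    prW_extN_cons_X1 p X Y κ pc hlaw a t (by omega)]
  have hratio := bsc_true_le hpc0 hpc1 a
  have hscale : 0 ≤ ((κ : ℝ) - 1) * (1 / 2) ^ (t.length + 1) :=
    mul_nonneg (sub_nonneg.2 (by exact_mod_cast hκ)) (by positivity)
  nlinarith

theorem le_delayR_add_mul_faR (hp : IsProbW p) (hκ : 1 ≤ κ) (hpc0 : 0 < pc) (hpc1 : pc ≤ 1 / 2)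
    (hlaw : BSCLaw p X Y κ pc) (hSdef : ∀ ω, S ω = if X 1 ω = true then 1 else κ)
    {q : ℕ → (ℕ → Bool) → ℝ} (hq : IsRandST q κ) :
    ((κ : ℝ) - 1) / 2 ≤ delayR p Y S κ q + (1 - pc) / pc * ((κ : ℝ) - 1) * faR p Y S κ q := by
  set lam := (1 - pc) / pc * ((κ : ℝ) - 1)
  have hlam : 0 ≤ lam :=
    mul_nonneg (div_nonneg (by linarith) hpc0.le) (sub_nonneg.2 (by exact_mod_cast hκ))
  set V : Ω → List Bool := fun ω => prefixOf (pathOf Y ω) κ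
  set Z : Ω → ℝ := fun ω => if X 1 ω = true then (κ : ℝ) - 1 else -lam
  set φ : List Bool → ℝ := fun y => 1 - q κ (fun j => y.getD (j - 1) false)
  have hφ : ∀ y, 0 ≤ φ y := fun y => sub_nonneg.2 <| hq.2.2 _ ▸
    single_le_sum (fun n _ => hq.1 n _) (mem_Icc.2 ⟨hκ, le_rfl⟩)
  -- `q κ` only sees the first `κ` observations, i.e. the node `V ω`
  have hqV : ∀ ω, 1 - q κ (pathOf Y ω) = φ (V ω) := by
    intro ω
    obtain ⟨hlen, hext⟩ := (prefixOf_eq_iff _ _ _).1 (rfl : V ω = V ω)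
    have hagree := (extN_iff_getD _ _ false).1 hext
    simp only [φ, hq.2.1 κ (pathOf Y ω) _ fun i h1 h2 => hagree i h1 (hlen ▸ h2)]
  calc ((κ : ℝ) - 1) / 2 = ((κ : ℝ) - 1) * prW p (fun ω => X 1 ω = true) := by
        rw [prW_X1 p X Y κ pc hlaw hκ]; ring
    _ ≤ ((κ : ℝ) - 1) * prW p (fun ω => X 1 ω = true) - exW p (fun ω => φ (V ω) * Z ω) := by
        linarith [exW_mul_nonpos p V hφ Z (exW_prefixOf_fiber_nonpos p X Y κ pc hlaw hκ hpc0 hpc1)]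
    _ = exW p (fun ω => (if X 1 ω = true then (κ : ℝ) - 1 else 0) -
          (1 - q κ (pathOf Y ω)) * (if X 1 ω = true then (κ : ℝ) - 1 else -lam)) := by
        rw [exW_sub, exW_ite_const]
        simp only [hqV, Z]
    _ ≤ exW p (fun ω => ∑ n ∈ Icc 1 κ, q n (pathOf Y ω) * posP ((n : ℝ) - S ω) +
          lam * ∑ n ∈ Icc 1 κ, q n (pathOf Y ω) * (if n < S ω then 1 else 0)) :=
        exW_mono p hp fun ω => by
          rw [hSdef ω]; exact le_path_cost hκ (hq.1 · _) (hq.2.2 _) hlam (X 1 ω)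
    _ = _ := by rw [exW_add, exW_const_mul]; rfl

lemma aW_nil (hp : IsProbW p) (hκ : 1 ≤ κ) (hSdef : ∀ ω, S ω = if X 1 ω = true then 1 else κ) :
    aW p Y S [] = 1 :=
  prW_of_forall p hp fun ω => ⟨extN_nil _, (mem_Icc.1 (S_mem_Icc X κ S hSdef hκ ω)).1⟩

lemma aW_eq (hSdef : ∀ ω, S ω = if X 1 ω = true then 1 else κ) {y : List Bool}
    (hy1 : 1 ≤ y.length) (hyκ : y.length < κ) :
    aW p Y S y = prW p (fun ω => ExtN y (pathOf Y ω) ∧ X 1 ω = false) :=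
  prW_congr p fun ω => and_congr_right' (lt_S_iff X κ S hSdef hy1 hyκ ω)

lemma aSubW_horizon (hκ : 1 ≤ κ) (hSdef : ∀ ω, S ω = if X 1 ω = true then 1 else κ)
    (y : List Bool) : aSubW p Y S y (fun _ => κ) = 0 :=
  prW_of_forall_not p fun ω h => by
    have := (mem_Icc.1 (S_mem_Icc X κ S hSdef hκ ω)).2
    have h2 : κ < S ω := h.2
    omega

lemma bW_nil (hκ : 1 ≤ κ) (hSdef : ∀ ω, S ω = if X 1 ω = true then 1 else κ) :
    bW p Y S [] = 0 := by
  refine (sum_eq_zero fun ω _ => ?_ : exW p _ = 0)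
  have : (1 : ℝ) ≤ S ω := by exact_mod_cast (mem_Icc.1 (S_mem_Icc X κ S hSdef hκ ω)).1
  simp only [List.length_nil, CharP.cast_eq_zero, posP_of_nonpos (by linarith : (0 : ℝ) - S ω ≤ 0),
    ite_self, mul_zero]

lemma exW_extN_posP_sub_S (hSdef : ∀ ω, S ω = if X 1 ω = true then 1 else κ) {c : ℕ}
    (hc1 : 1 ≤ c) (hcκ : c ≤ κ) (y : List Bool) :
    exW p (fun ω => if ExtN y (pathOf Y ω) then posP ((c : ℝ) - S ω) else 0) =
      ((c : ℝ) - 1) * prW p (fun ω => ExtN y (pathOf Y ω) ∧ X 1 ω = true) := by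
  simp only [posP_sub_S X κ S hSdef hc1 hcκ, ← ite_and, exW_ite_const]

lemma bW_eq (hSdef : ∀ ω, S ω = if X 1 ω = true then 1 else κ) {y : List Bool}
    (hy1 : 1 ≤ y.length) (hyκ : y.length ≤ κ) :
    bW p Y S y = ((y.length : ℝ) - 1) * prW p (fun ω => ExtN y (pathOf Y ω) ∧ X 1 ω = true) :=
  exW_extN_posP_sub_S p X Y κ S hSdef hy1 hyκ y

lemma bSubW_horizon (hκ : 1 ≤ κ) (hSdef : ∀ ω, S ω = if X 1 ω = true then 1 else κ)
    (y : List Bool) :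
    bSubW p Y S y (fun _ => κ) =
      ((κ : ℝ) - 1) * prW p (fun ω => ExtN y (pathOf Y ω) ∧ X 1 ω = true) :=
  exW_extN_posP_sub_S p X Y κ S hSdef hκ le_rfl y

lemma bSubW_nil_horizon (hκ : 1 ≤ κ) (hlaw : BSCLaw p X Y κ pc)
    (hSdef : ∀ ω, S ω = if X 1 ω = true then 1 else κ) :
    bSubW p Y S [] (fun _ => κ) = ((κ : ℝ) - 1) / 2 := by
  rw [bSubW_horizon p X Y κ S hκ hSdef, prW_congr p (B := fun ω => X 1 ω = true)
    fun ω => and_iff_right (extN_nil _), prW_X1 p X Y κ pc hlaw hκ]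
  ring

lemma gW_nil (hp : IsProbW p) (hκ : 1 ≤ κ) (hlaw : BSCLaw p X Y κ pc)
    (hSdef : ∀ ω, S ω = if X 1 ω = true then 1 else κ) :
    gW p Y S (fun _ => κ) [] = ((κ : ℝ) - 1) / 2 := by
  rw [gW, aW_nil p X Y κ S hp hκ hSdef, aSubW_horizon p X Y κ S hκ hSdef,
    bW_nil p X Y κ S hκ hSdef, bSubW_nil_horizon p X Y κ pc S hκ hlaw hSdef]
  ring

lemma gW_cons (hpc0 : 0 < pc) (hpc1 : pc < 1) (hlaw : BSCLaw p X Y κ pc)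
    (hSdef : ∀ ω, S ω = if X 1 ω = true then 1 else κ) (a : Bool) (t : List Bool)
    (ht : t.length + 1 < κ) :
    gW p Y S (fun _ => κ) (a :: t) =
      ((κ : ℝ) - (t.length + 1)) * bsc pc true a / bsc pc false a := by
  have hlen : (a :: t).length = t.length + 1 := rfl
  rw [gW, aW_eq p X Y κ S hSdef (by omega) (by omega), aSubW_horizon p X Y κ S (by omega) hSdef,
    bW_eq p X Y κ S hSdef (by omega) (by omega), bSubW_horizon p X Y κ S (by omega) hSdef,
    prW_extN_cons_X1 p X Y κ pc hlaw a t (by omega),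
    prW_extN_cons_X1 p X Y κ pc hlaw a t (by omega), hlen]
  have := (bsc_pos hpc0 hpc1 false a).ne'
  field_simp
  push_cast
  ring

lemma sSup_gW_horizon (hp : IsProbW p) (hκ : 2 ≤ κ) (hpc0 : 0 < pc) (hpc1 : pc ≤ 1 / 2)
    (hlaw : BSCLaw p X Y κ pc) (hSdef : ∀ ω, S ω = if X 1 ω = true then 1 else κ) :
    sSup ((fun y => gW p Y S (fun _ => κ) y) '' {y : List Bool | y.length < κ}) =
      (1 - pc) / pc * ((κ : ℝ) - 1) := by
  have hκ' : (2 : ℝ) ≤ κ := by exact_mod_cast hκ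
  have hpc1' : pc < 1 := by linarith
  have hratio : 1 ≤ (1 - pc) / pc := by rw [le_div_iff₀ hpc0]; linarith
  refine IsGreatest.csSup_eq ⟨⟨[true], show 1 < κ by omega, ?_⟩, ?_⟩
  · simp only [gW_cons p X Y κ pc S hpc0 hpc1' hlaw hSdef true [] (show 0 + 1 < κ by omega),
      bsc, List.length_nil, CharP.cast_eq_zero, zero_add, ↓reduceIte, Bool.true_eq_false]
    ring
  · rintro _ ⟨y, hy, rfl⟩
    dsimp only
    cases y with
    | nil =>
      rw [gW_nil p X Y κ pc S hp (by omega) hlaw hSdef]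
      nlinarith
    | cons a t =>
      replace hy : t.length + 1 < κ := hy
      have ht : (1 : ℝ) ≤ t.length + 1 := by simp
      have hbsc := bsc_true_le hpc0 hpc1 a
      rw [gW_cons p X Y κ pc S hpc0 hpc1' hlaw hSdef a t hy, div_le_iff₀ (bsc_pos hpc0 hpc1' _ _)]
      calc ((κ : ℝ) - (t.length + 1)) * bsc pc true a ≤ ((κ : ℝ) - 1) * bsc pc true a :=
            mul_le_mul_of_nonneg_right (by linarith) (bsc_pos hpc0 hpc1' _ _).le
        _ ≤ ((κ : ℝ) - 1) * ((1 - pc) / pc * bsc pc false a) :=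
            mul_le_mul_of_nonneg_left hbsc (by linarith)
        _ = _ := by ring

lemma isRandST_horizon (hκ : 1 ≤ κ) : IsRandST (detKer fun _ : ℕ → Bool => κ) κ :=
  isRandST_detKer (fun _ _ _ => rfl) fun _ => mem_Icc.2 ⟨hκ, le_rfl⟩

lemma faR_horizon (hκ : 1 ≤ κ) (hSdef : ∀ ω, S ω = if X 1 ω = true then 1 else κ) :
    faR p Y S κ (detKer fun _ => κ) = 0 := by
  rw [faR_detKer p Y S fun _ => mem_Icc.2 ⟨hκ, le_rfl⟩, aSubW_horizon p X Y κ S hκ hSdef]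

lemma delayR_horizon (hκ : 1 ≤ κ) (hlaw : BSCLaw p X Y κ pc)
    (hSdef : ∀ ω, S ω = if X 1 ω = true then 1 else κ) :
    delayR p Y S κ (detKer fun _ => κ) = ((κ : ℝ) - 1) / 2 := by
  rw [delayR_detKer p Y S fun _ => mem_Icc.2 ⟨hκ, le_rfl⟩,
    bSubW_nil_horizon p X Y κ pc S hκ hlaw hSdef]

lemma sub_mul_le_delayR (hp : IsProbW p) (hκ : 1 ≤ κ) (hpc0 : 0 < pc) (hpc1 : pc ≤ 1 / 2)
    (hlaw : BSCLaw p X Y κ pc) (hSdef : ∀ ω, S ω = if X 1 ω = true then 1 else κ)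
    {q : ℕ → (ℕ → Bool) → ℝ} (hq : IsRandST q κ) {α : ℝ} (hfa : faR p Y S κ q ≤ α) :
    ((κ : ℝ) - 1) / 2 - (1 - pc) / pc * ((κ : ℝ) - 1) * α ≤ delayR p Y S κ q := by
  have hlam : 0 ≤ (1 - pc) / pc * ((κ : ℝ) - 1) :=
    mul_nonneg (div_nonneg (by linarith) hpc0.le) (sub_nonneg.2 (by exact_mod_cast hκ))
  nlinarith [le_delayR_add_mul_faR p X Y κ pc S hp hκ hpc0 hpc1 hlaw hSdef hq]

lemma le_dW (hp : IsProbW p) (hκ : 1 ≤ κ) (hpc0 : 0 < pc) (hpc1 : pc ≤ 1 / 2)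
    (hlaw : BSCLaw p X Y κ pc) (hSdef : ∀ ω, S ω = if X 1 ω = true then 1 else κ)
    {α : ℝ} (hα : 0 ≤ α) :
    ((κ : ℝ) - 1) / 2 - (1 - pc) / pc * ((κ : ℝ) - 1) * α ≤ dW p Y S κ α := by
  refine le_csInf ⟨_, _, isRandST_horizon κ hκ, ?_, rfl⟩ ?_
  · rw [faR_horizon p X Y κ S hκ hSdef]; exact hα
  · rintro _ ⟨q, hq, hfa, rfl⟩
    exact sub_mul_le_delayR p X Y κ pc S hp hκ hpc0 hpc1 hlaw hSdef hq hfa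

lemma dW_zero (hp : IsProbW p) (hκ : 1 ≤ κ) (hpc0 : 0 < pc) (hpc1 : pc ≤ 1 / 2)
    (hlaw : BSCLaw p X Y κ pc) (hSdef : ∀ ω, S ω = if X 1 ω = true then 1 else κ) :
    dW p Y S κ 0 = ((κ : ℝ) - 1) / 2 := by
  refine IsLeast.csInf_eq ⟨⟨_, isRandST_horizon κ hκ, ?_, ?_⟩, ?_⟩
  · rw [faR_horizon p X Y κ S hκ hSdef]
  · rw [delayR_horizon p X Y κ pc S hκ hlaw hSdef]
  · rintro _ ⟨q, hq, hfa, rfl⟩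
    simpa using sub_mul_le_delayR p X Y κ pc S hp hκ hpc0 hpc1 hlaw hSdef hq hfa

end Example

/-- in the binary-symmetric tracking example (X i.i.d. Bernoulli(1/2),
Y the BSC(p) output of X, S = 1 if X₁ = 1 else κ): `d(0) = (κ-1)/2`,
`λ₁ = ((1-p)/p)(κ-1)`, and `d(α) ≥ (κ-1)(1/2 - α(1-p)/p)`. -/
theorem bsc_example_bound
    {Ω : Type*} [Fintype Ω]
    (p : Ω → ℝ) (hp : IsProbW p) (X Y : ℕ → Ω → Bool) (κ : ℕ) (hκ : 2 ≤ κ)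
    (pc : ℝ) (hpc0 : 0 < pc) (hpc1 : pc < 1 / 2)
    (hlaw : ∀ x yf : ℕ → Bool,
      prW p (fun ω => ∀ i, 1 ≤ i → i ≤ κ → X i ω = x i ∧ Y i ω = yf i) =
        ∏ i ∈ Finset.Icc 1 κ, ((1 / 2 : ℝ) * if yf i = x i then 1 - pc else pc))
    (S : Ω → ℕ) (hSdef : ∀ ω, S ω = if X 1 ω = true then 1 else κ) :
    dW p Y S κ 0 = ((κ : ℝ) - 1) / 2 ∧
    sSup ((fun y => gW p Y S (fun _ => κ) y) '' {y : List Bool | y.length < κ}) =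
      ((1 - pc) / pc) * ((κ : ℝ) - 1) ∧
    ∀ α ∈ Set.Icc (0 : ℝ) 1,
      ((κ : ℝ) - 1) * (1 / 2 - α * (1 - pc) / pc) ≤ dW p Y S κ α := by
  have hκ1 : 1 ≤ κ := by omega
  refine ⟨dW_zero p X Y κ pc S hp hκ1 hpc0 hpc1.le hlaw hSdef,
    sSup_gW_horizon p X Y κ pc S hp hκ hpc0 hpc1.le hlaw hSdef, fun α hα => ?_⟩
  convert le_dW p X Y κ pc S hp hκ1 hpc0 hpc1.le hlaw hSdef hα.1 using 1
  ring
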